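/- arXiv:math/9809149 — 4 statements merged into one kernel-verified Lean document; each statement's English description precedes it below -/
import Mathlib

section
/- Let p be an odd prime and let A, B be 2×2 matrices over the field 𝔽_p with trace zero such that A² = ε·1 for some ε ∈ 𝔽_p^× that is not a square in 𝔽_p, AB = −BA, and det B = 0. Then B = 0. -/
/-- If A, B are traceless 2×2 matrices over 𝔽_p (p odd), A² = ε·1 with ε a nonsquare unit,
A and B anticommute, and det B = 0, then B = 0. -/
theorem stmt_9 (p : ℕ) [Fact p.Prime] (hp : Odd p)
    (ε : (ZMod p)ˣ) (hε : ¬ IsSquare ((ε : ZMod p)))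
    (A B : Matrix (Fin 2) (Fin 2) (ZMod p))
    (hA : A.trace = 0) (hB : B.trace = 0)
    (hA2 : A * A = (ε : ZMod p) • (1 : Matrix (Fin 2) (Fin 2) (ZMod p)))
    (hanti : A * B = -(B * A))
    (hdB : B.det = 0) :
    B = 0 := by
  set x := A 0 0 with hx
  set y := A 0 1 with hy
  set z := A 1 0 with hz
  set a := B 0 0 with ha
  set b := B 0 1 with hb
  set c := B 1 0 with hc
  rw [Matrix.trace_fin_two] at hA hB
  have hA11 : A 1 1 = -x := by linear_combination hA
  have hB11 : B 1 1 = -a := by linear_combination hB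
  rw [Matrix.det_fin_two] at hdB
  have h1 : x * x + y * z = (ε : ZMod p) := by
    have := congrFun (congrFun hA2 0) 0
    simpa [Matrix.mul_apply, Fin.sum_univ_two, Matrix.one_apply] using this
  have h2 : 2 * a * x + y * c + b * z = 0 := by
    have := congrFun (congrFun hanti 0) 0
    simp [Matrix.mul_apply, Fin.sum_univ_two] at this
    linear_combination this
  have h3 : a * a = -(b * c) := by
    rw [hB11] at hdB
    linear_combination -hdB
  have hbkey : (ε : ZMod p) * b ^ 2 = (x * b - a * y) ^ 2 := by
    linear_combination (-(b^2)) * h1 + (y*b) * h2 + (-(y^2)) * h3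
  have hckey : (ε : ZMod p) * c ^ 2 = (x * c - a * z) ^ 2 := by
    linear_combination (-(c^2)) * h1 + (z*c) * h2 + (-(z^2)) * h3
  have hb0 : b = 0 := by
    by_contra hb0
    apply hε
    exact ⟨(x * b - a * y) / b, by field_simp; linear_combination hbkey⟩
  have hc0 : c = 0 := by
    by_contra hc0
    apply hε
    exact ⟨(x * c - a * z) / c, by field_simp; linear_combination hckey⟩
  have ha0 : a = 0 := by
    have : a * a = 0 := by rw [h3, hb0]; ring
    exact pow_eq_zero_iff (n := 2) (by norm_num) |>.mp (by linear_combination this)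
  ext i j
  fin_cases i <;> fin_cases j <;>
    simp [← ha, ← hb, ← hc, ha0, hb0, hc0, hB11]
end

section
/- Let p be an odd prime and let a, b ∈ ℚ_p^×. Suppose there exist 2×2 matrices j, j′ over ℚ_p with j² = a·1, j′² = b·1, and jj′ = −j′j. Then the ternary quadratic form z² − ax² − by² is isotropic over ℚ_p: there exist x, y, z ∈ ℚ_p, not all zero, with z² = a·x² + b·y². -/
/-- If 2×2 matrices j, j' over ℚ_p satisfy j² = a·1, j'² = b·1 and anticommute, then the
ternary quadratic form z² - ax² - by² is isotropic over ℚ_p. -/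
theorem stmt_10 (p : ℕ) [Fact p.Prime] (hp : Odd p)
    (a b : ℚ_[p]) (ha : a ≠ 0) (hb : b ≠ 0)
    (j j' : Matrix (Fin 2) (Fin 2) ℚ_[p])
    (hj : j * j = a • (1 : Matrix (Fin 2) (Fin 2) ℚ_[p]))
    (hj' : j' * j' = b • (1 : Matrix (Fin 2) (Fin 2) ℚ_[p]))
    (hanti : j * j' = -(j' * j)) :
    ∃ x y z : ℚ_[p], ¬ (x = 0 ∧ y = 0 ∧ z = 0) ∧ z ^ 2 = a * x ^ 2 + b * y ^ 2 := by
  set A := j 0 0 with hA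
  set B := j 0 1 with hB
  set C := j 1 0 with hC
  set D := j 1 1 with hD
  set A' := j' 0 0 with hA'
  set B' := j' 0 1 with hB'
  set C' := j' 1 0 with hC'
  set D' := j' 1 1 with hD'
  have e00 : A * A' + B * C' = -(A' * A + B' * C) := by
    have := congrFun (congrFun hanti 0) 0
    simpa [Matrix.mul_apply, Fin.sum_univ_two, Matrix.neg_apply] using this
  have e01 : A * B' + B * D' = -(A' * B + B' * D) := by
    have := congrFun (congrFun hanti 0) 1
    simpa [Matrix.mul_apply, Fin.sum_univ_two, Matrix.neg_apply] using this
  have e10 : C * A' + D * C' = -(C' * A + D' * C) := by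
    have := congrFun (congrFun hanti 1) 0
    simpa [Matrix.mul_apply, Fin.sum_univ_two, Matrix.neg_apply] using this
  have f00 : A * A + B * C = a := by
    have := congrFun (congrFun hj 0) 0
    simpa [Matrix.mul_apply, Fin.sum_univ_two, Matrix.smul_apply, Matrix.one_apply] using this
  have f01 : A * B + B * D = 0 := by
    have := congrFun (congrFun hj 0) 1
    simpa [Matrix.mul_apply, Fin.sum_univ_two, Matrix.smul_apply, Matrix.one_apply] using this
  have f10 : C * A + D * C = 0 := by
    have := congrFun (congrFun hj 1) 0
    simpa [Matrix.mul_apply, Fin.sum_univ_two, Matrix.smul_apply, Matrix.one_apply] using this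
  have g00 : A' * A' + B' * C' = b := by
    have := congrFun (congrFun hj' 0) 0
    simpa [Matrix.mul_apply, Fin.sum_univ_two, Matrix.smul_apply, Matrix.one_apply] using this
  have g01 : A' * B' + B' * D' = 0 := by
    have := congrFun (congrFun hj' 0) 1
    simpa [Matrix.mul_apply, Fin.sum_univ_two, Matrix.smul_apply, Matrix.one_apply] using this
  have g10 : C' * A' + D' * C' = 0 := by
    have := congrFun (congrFun hj' 1) 0
    simpa [Matrix.mul_apply, Fin.sum_univ_two, Matrix.smul_apply, Matrix.one_apply] using this
  -- trace of j is zero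
  have trj : A + D = 0 := by
    by_contra hs
    have hB0 : B = 0 := by
      rcases mul_eq_zero.1 (show B * (A + D) = 0 by linear_combination f01) with h | h
      · exact h
      · exact absurd h hs
    have hC0 : C = 0 := by
      rcases mul_eq_zero.1 (show C * (A + D) = 0 by linear_combination f10) with h | h
      · exact h
      · exact absurd h hs
    have hAne : A ≠ 0 := by
      intro h0
      exact ha (by linear_combination -f00 + A * h0 + C * hB0)
    have hB'0 : B' = 0 := by
      rcases mul_eq_zero.1 (show B' * (A + D) = 0 by
          linear_combination e01 - A' * hB0 - D' * hB0) with h | h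
      · exact h
      · exact absurd h hs
    have hC'0 : C' = 0 := by
      rcases mul_eq_zero.1 (show C' * (A + D) = 0 by
          linear_combination e10 - A' * hC0 - D' * hC0) with h | h
      · exact h
      · exact absurd h hs
    have hA'ne : A' ≠ 0 := by
      intro h0
      exact hb (by linear_combination -g00 + A' * h0 + C' * hB'0)
    have : (2 : ℚ_[p]) * A * A' = 0 := by
      linear_combination e00 - C' * hB0 - C * hB'0
    rcases mul_eq_zero.1 this with h | h
    · rcases mul_eq_zero.1 h with h2 | h2
      · exact two_ne_zero h2
      · exact hAne h2
    · exact hA'ne h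
  -- trace of j' is zero
  have trj' : A' + D' = 0 := by
    by_contra hs
    have hB'0 : B' = 0 := by
      rcases mul_eq_zero.1 (show B' * (A' + D') = 0 by linear_combination g01) with h | h
      · exact h
      · exact absurd h hs
    have hC'0 : C' = 0 := by
      rcases mul_eq_zero.1 (show C' * (A' + D') = 0 by linear_combination g10) with h | h
      · exact h
      · exact absurd h hs
    have hA'ne : A' ≠ 0 := by
      intro h0
      exact hb (by linear_combination -g00 + A' * h0 + C' * hB'0)
    have hB0 : B = 0 := by
      rcases mul_eq_zero.1 (show B * (A' + D') = 0 by
          linear_combination e01 - A * hB'0 - D * hB'0) with h | h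
      · exact h
      · exact absurd h hs
    have hC0 : C = 0 := by
      rcases mul_eq_zero.1 (show C * (A' + D') = 0 by
          linear_combination e10 - A * hC'0 - D * hC'0) with h | h
      · exact h
      · exact absurd h hs
    have hAne : A ≠ 0 := by
      intro h0
      exact ha (by linear_combination -f00 + A * h0 + C * hB0)
    have : (2 : ℚ_[p]) * A * A' = 0 := by
      linear_combination e00 - C' * hB0 - C * hB'0
    rcases mul_eq_zero.1 this with h | h
    · rcases mul_eq_zero.1 h with h2 | h2
      · exact two_ne_zero h2
      · exact hAne h2
    · exact hA'ne h
  have e00sum : 2 * A * A' + B * C' + B' * C = 0 := by linear_combination e00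
  refine ⟨B', B, A * B' - A' * B, ?_, ?_⟩
  · rintro ⟨hx, hy, _⟩
    have hAne : A ≠ 0 := by
      intro h0
      exact ha (by linear_combination -f00 + A * h0 + C * hy)
    have hA'ne : A' ≠ 0 := by
      intro h0
      exact hb (by linear_combination -g00 + A' * h0 + C' * hx)
    have : (2 : ℚ_[p]) * A * A' = 0 := by
      linear_combination e00sum - C' * hy - C * hx
    rcases mul_eq_zero.1 this with h | h
    · rcases mul_eq_zero.1 h with h2 | h2
      · exact two_ne_zero h2
      · exact hAne h2
    · exact hA'ne h
  · linear_combination B' ^ 2 * f00 + B ^ 2 * g00 - B * B' * e00sum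
end

section
/- Let p be a prime and a, b integers with 1 ≤ a ≤ b. Then, in ℤ, the sum of the four quantities S₁ = −(p+1)·a + (1−p)·Σ_{r=1}^{a−1} (a−r)(p−1)·p^{r−1}, S₂ = 2(1−p)·Σ_{ℓ=1}^{b−a} ( a + Σ_{r=1}^{a−1} (a−r)(p−1)·p^{r−1} ), S₃ = 2(1−p)·Σ_{ℓ=b−a+1}^{b−1} ( a + Σ_{r=1}^{b−ℓ−1} (a−r)(p−1)·p^{r−1} ), and S₄ = 2a + 2·Σ_{ℓ=b−a+1}^{b−1} ( a − (b−ℓ) )·(p−1)·p^{b−ℓ−1}, satisfies S₁ + S₂ + S₃ + S₄ = 2b + 1 − (2(b−a)+1)·p^a − 2·Σ_{i=0}^{a−1} p^i. (With α = 2a and β = 2b, this is the evaluation (6.4)+(6.5)+(6.6)+(6.7) of the vertical intersection number, equal to β + 1 − (β−α+1)·p^{α/2} − 2(p^{α/2}−1)/(p−1).) -/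
open Finset

lemma key (p c : ℤ) : ∀ m : ℕ,
    ∑ r ∈ Icc 1 m, (c - r) * (p - 1) * p ^ (r - 1)
      = (c - m) * p ^ m - c + ∑ i ∈ range m, p ^ i := by
  intro m
  induction m with
  | zero => simp
  | succ n ih =>
      rw [Finset.sum_Icc_succ_top (by omega : 1 ≤ n + 1), ih, Finset.sum_range_succ]
      simp only [Nat.add_sub_cancel]
      push_cast
      ring

lemma reidx (a b : ℕ) (ha : 1 ≤ a) (hab : a ≤ b) (f : ℕ → ℤ) :
    ∑ ℓ ∈ Icc (b - a + 1) (b - 1), f (b - ℓ) = ∑ k ∈ Icc 1 (a - 1), f k := by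
  refine Finset.sum_nbij' (fun ℓ => b - ℓ) (fun k => b - k) ?_ ?_ ?_ ?_ ?_
  all_goals simp only [Finset.mem_Icc]
  all_goals intros
  all_goals first | omega | trivial

lemma perk (p : ℤ) (a : ℕ) (k : ℕ) (hk : 1 ≤ k) :
    2 * (1 - p) * ((a : ℤ) + ∑ r ∈ Icc 1 (k - 1), ((a : ℤ) - r) * (p - 1) * p ^ (r - 1))
      + 2 * ((a : ℤ) - (k : ℤ)) * (p - 1) * p ^ (k - 1)
    = 2 - 2 * p ^ k := by
  obtain ⟨n, rfl⟩ := Nat.exists_eq_add_of_le hk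
  rw [key]
  simp only [Nat.add_sub_cancel_left, Nat.add_sub_cancel]
  have hg : (p - 1) * ∑ i ∈ range n, p ^ i = p ^ n - 1 := by
    rw [mul_comm, geom_sum_mul]
  push_cast
  rw [show p ^ (1 + n) = p * p ^ n by rw [pow_add, pow_one]]
  linear_combination (-2 : ℤ) * hg

lemma iccpow (p : ℤ) (a : ℕ) (ha : 1 ≤ a) :
    ∑ k ∈ Icc 1 (a - 1), p ^ k = (∑ i ∈ range a, p ^ i) - 1 := by
  obtain ⟨n, rfl⟩ := Nat.exists_eq_add_of_le ha
  simp only [Nat.add_sub_cancel_left]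
  rw [Nat.add_comm 1 n, Finset.sum_range_succ' (fun i => p ^ i) n,
    ← Finset.Ico_add_one_right_eq_Icc, Finset.sum_Ico_eq_sum_range]
  simp [add_comm]

lemma sum34 (p : ℤ) (a b : ℕ) (ha : 1 ≤ a) (hab : a ≤ b) :
    2 * (1 - p) *
        (∑ ℓ ∈ Icc (b - a + 1) (b - 1),
          ((a : ℤ) + ∑ r ∈ Icc 1 (b - ℓ - 1), ((a : ℤ) - r) * (p - 1) * p ^ (r - 1)))
      + 2 * ∑ ℓ ∈ Icc (b - a + 1) (b - 1),
          ((a : ℤ) - ((b : ℤ) - (ℓ : ℤ))) * (p - 1) * p ^ (b - ℓ - 1)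
    = 2 * ((a : ℤ) - 1) - 2 * ((∑ i ∈ range a, p ^ i) - 1) := by
  rw [Finset.mul_sum, Finset.mul_sum, ← Finset.sum_add_distrib]
  have step1 : ∑ ℓ ∈ Icc (b - a + 1) (b - 1),
      (2 * (1 - p) *
          ((a : ℤ) + ∑ r ∈ Icc 1 (b - ℓ - 1), ((a : ℤ) - r) * (p - 1) * p ^ (r - 1))
        + 2 * (((a : ℤ) - ((b : ℤ) - (ℓ : ℤ))) * (p - 1) * p ^ (b - ℓ - 1)))
      = ∑ k ∈ Icc 1 (a - 1), (2 - 2 * p ^ k) := by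
    rw [← reidx a b ha hab (fun k => 2 - 2 * p ^ k)]
    refine Finset.sum_congr rfl fun ℓ hℓ => ?_
    simp only [Finset.mem_Icc] at hℓ
    have hℓb : ℓ ≤ b := by omega
    have hk : 1 ≤ b - ℓ := by omega
    have h := perk p a (b - ℓ) hk
    rw [Nat.cast_sub hℓb] at h
    simpa using by linear_combination h
  rw [step1, Finset.sum_sub_distrib, Finset.sum_const, Nat.card_Icc,
    ← Finset.mul_sum, iccpow p a ha]
  have hcard : (a - 1 + 1 - 1 : ℕ) = a - 1 := by omega
  rw [hcard, nsmul_eq_mul]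
  have : ((a - 1 : ℕ) : ℤ) = (a : ℤ) - 1 := by omega
  rw [this]
  ring

/-- Evaluation (6.4)+(6.5)+(6.6)+(6.7) of the vertical intersection number (α = 2a, β = 2b):
S₁ + S₂ + S₃ + S₄ = 2b + 1 - (2(b-a)+1)·p^a - 2·Σ_{i<a} p^i. -/
theorem stmt_14 (p a b : ℕ) (hp : p.Prime) (ha : 1 ≤ a) (hab : a ≤ b) :
    (-((p : ℤ) + 1) * a +
        (1 - (p : ℤ)) *
          ∑ r ∈ Finset.Icc 1 (a - 1), ((a : ℤ) - r) * ((p : ℤ) - 1) * (p : ℤ) ^ (r - 1)) +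
      (2 * (1 - (p : ℤ)) *
        ∑ _ℓ ∈ Finset.Icc 1 (b - a),
          ((a : ℤ) +
            ∑ r ∈ Finset.Icc 1 (a - 1), ((a : ℤ) - r) * ((p : ℤ) - 1) * (p : ℤ) ^ (r - 1))) +
      (2 * (1 - (p : ℤ)) *
        ∑ ℓ ∈ Finset.Icc (b - a + 1) (b - 1),
          ((a : ℤ) +
            ∑ r ∈ Finset.Icc 1 (b - ℓ - 1), ((a : ℤ) - r) * ((p : ℤ) - 1) * (p : ℤ) ^ (r - 1))) +
      (2 * (a : ℤ) +
        2 * ∑ ℓ ∈ Finset.Icc (b - a + 1) (b - 1),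
          ((a : ℤ) - ((b : ℤ) - (ℓ : ℤ))) * ((p : ℤ) - 1) * (p : ℤ) ^ (b - ℓ - 1)) =
    2 * (b : ℤ) + 1 - (2 * ((b : ℤ) - (a : ℤ)) + 1) * (p : ℤ) ^ a -
      2 * ∑ i ∈ Finset.range a, (p : ℤ) ^ i := by
  have h34 := sum34 (p : ℤ) a b ha hab
  have hkey := key (p : ℤ) (a : ℤ) (a - 1)
  have hc : ((a - 1 : ℕ) : ℤ) = (a : ℤ) - 1 := by omega
  have hG : ∑ i ∈ Finset.range a, (p : ℤ) ^ i
      = (∑ i ∈ Finset.range (a - 1), (p : ℤ) ^ i) + (p : ℤ) ^ (a - 1) := by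
    conv_lhs => rw [show a = (a - 1) + 1 by omega]
    rw [Finset.sum_range_succ]
  have hgeom : ((p : ℤ) - 1) * ∑ i ∈ Finset.range (a - 1), (p : ℤ) ^ i
      = (p : ℤ) ^ (a - 1) - 1 := by rw [mul_comm, geom_sum_mul]
  have hpa : (p : ℤ) ^ a = (p : ℤ) ^ (a - 1) * (p : ℤ) := by
    conv_lhs => rw [show a = (a - 1) + 1 by omega]
    rw [pow_succ]
  rw [hkey, hc] at *
  rw [Finset.sum_const, Nat.card_Icc, Nat.add_sub_cancel, nsmul_eq_mul]
  have hba : ((b - a : ℕ) : ℤ) = (b : ℤ) - (a : ℤ) := by omega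
  rw [hba, hG, hpa]
  rw [hG] at h34
  linear_combination h34 + (-(1 : ℤ) - 2 * ((b : ℤ) - (a : ℤ))) * hgeom
end

section
/- Let p be an odd prime and let a, a′, b₀, b₀′, c, c′ ∈ ℤ_p with p dividing a and p dividing a′, and with b₀, b₀′, c, c′ units in ℤ_p. Set j = [[a, p·b₀],[c, −a]] and j′ = [[a′, p·b₀′],[c′, −a′]] (2×2 matrices over ℤ_p), and suppose jj′ = −j′j. Then b₀·c′ − b₀′·c is a unit in ℤ_p. -/
/-- If j = [[a, p·b₀],[c, -a]] and j' = [[a', p·b₀'],[c', -a']] over ℤ_p (p odd), with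
p ∣ a, p ∣ a', and b₀, b₀', c, c' units, anticommute, then b₀·c' - b₀'·c is a unit. -/
theorem stmt_17 (p : ℕ) [Fact p.Prime] (hp : Odd p)
    (a a' b₀ b₀' c c' : ℤ_[p])
    (hpa : (p : ℤ_[p]) ∣ a) (hpa' : (p : ℤ_[p]) ∣ a')
    (hb₀ : IsUnit b₀) (hb₀' : IsUnit b₀') (hc : IsUnit c) (hc' : IsUnit c')
    (hanti : (!![a, (p : ℤ_[p]) * b₀; c, -a]) * (!![a', (p : ℤ_[p]) * b₀'; c', -a']) =
      -((!![a', (p : ℤ_[p]) * b₀'; c', -a']) * (!![a, (p : ℤ_[p]) * b₀; c, -a]))) :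
    IsUnit (b₀ * c' - b₀' * c) := by
  have hp0 : (p : ℤ_[p]) ≠ 0 := Nat.cast_ne_zero.2 (Fact.out : p.Prime).ne_zero
  obtain ⟨k, hk⟩ := hpa
  obtain ⟨k', hk'⟩ := hpa'
  have h00 : a * a' + (p : ℤ_[p]) * b₀ * c' = -(a' * a + (p : ℤ_[p]) * b₀' * c) := by
    have := congrFun (congrFun hanti 0) 0
    simpa [Matrix.mul_apply, Fin.sum_univ_succ] using this
  -- p divides s := b₀*c' + b₀'*c
  have hs : (p : ℤ_[p]) ∣ (b₀ * c' + b₀' * c) := by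
    have hmul : (p : ℤ_[p]) * (b₀ * c' + b₀' * c) = (p : ℤ_[p]) * (-2 * k * ((p:ℤ_[p]) * k')) := by
      subst hk hk'; ring_nf; ring_nf at h00; linear_combination h00
    have heq := mul_left_cancel₀ hp0 hmul
    exact ⟨-2 * k * k', by rw [heq]; ring⟩
  have hsn : ‖b₀ * c' + b₀' * c‖ < 1 := (PadicInt.norm_lt_one_iff_dvd _).2 hs
  have ht : IsUnit ((2 : ℤ_[p]) * (b₀' * c)) := by
    refine IsUnit.mul ?_ (hb₀'.mul hc)
    rw [PadicInt.isUnit_iff]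
    have h2 : ¬ ((p : ℤ) ∣ 2) := by
      intro h
      have hn : p ∣ 2 := Int.ofNat_dvd.1 h
      have hle2 : p ≤ 2 := Nat.le_of_dvd (by norm_num) hn
      interval_cases p
      · exact (Nat.not_prime_zero Fact.out)
      · exact (Nat.not_prime_one Fact.out)
      · exact (by decide : ¬ Odd 2) hp
    have := (PadicInt.norm_int_lt_one_iff_dvd (p := p) 2).not.2 h2
    push_neg at this
    have hle : ‖((2 : ℤ) : ℤ_[p])‖ ≤ 1 := PadicInt.norm_le_one _
    have : ‖((2 : ℤ) : ℤ_[p])‖ = 1 := le_antisymm hle this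
    simpa using this
  have key : b₀ * c' - b₀' * c = (b₀ * c' + b₀' * c) - 2 * (b₀' * c) := by ring
  rw [key]
  by_contra hcon
  have h1 : ‖(b₀ * c' + b₀' * c) - 2 * (b₀' * c)‖ < 1 := PadicInt.not_isUnit_iff.1 hcon
  have h2 : ‖(2 : ℤ_[p]) * (b₀' * c)‖ = 1 := PadicInt.isUnit_iff.1 ht
  have h3 : (2 : ℤ_[p]) * (b₀' * c) =
      (b₀ * c' + b₀' * c) + -((b₀ * c' + b₀' * c) - 2 * (b₀' * c)) := by ring
  have h4 := PadicInt.nonarchimedean (b₀ * c' + b₀' * c)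
    (-((b₀ * c' + b₀' * c) - 2 * (b₀' * c)))
  rw [← h3, norm_neg, h2] at h4
  exact absurd h4 (not_le.2 (max_lt hsn h1))
end
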